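/- Let ∂ : 𝔽₂^m → 𝔽₂^r be an 𝔽₂-linear map with m ≥ 1 and r ≥ 1, let w be the maximum row Hamming weight and q the maximum column Hamming weight of the matrix of ∂, and define the sandwich complex W by ∂₀^W : 𝔽₂^m → 𝔽₂^m ⊕ 𝔽₂^m ⊕ 𝔽₂^r, ∂₀^W(x) = (x, x, ∂x), and ∂₋₁^W : 𝔽₂^m ⊕ 𝔽₂^m ⊕ 𝔽₂^r → 𝔽₂^r ⊕ 𝔽₂^r, ∂₋₁^W(a, b, c) = (∂a + c, ∂b + c). Then: the maximum row weight of the matrix of ∂₋₁^W equals w + 1; the maximum column weight of the matrix of ∂₀^W equals q + 2; the maximum column weight of the matrix of ∂₋₁^W equals max(q, 2); and the maximum row weight of the matrix of ∂₀^W equals max(w, 1). Equivalently, in CSS code terms: w^X(W) = w + 1, w^Z(W) = q + 2, q^X(W) = max(q, 2), q^Z(W) = max(w, 1). -/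

import Mathlib

/-!
STATEMENT 11: Weights of the sandwich complex W built from ∂ : 𝔽₂^m → 𝔽₂^r
(m, r ≥ 1) with ∂₀^W(x) = (x, x, ∂x), ∂₋₁^W(a,b,c) = (∂a + c, ∂b + c):
w^X(W) = w + 1, w^Z(W) = q + 2, q^X(W) = max(q, 2), q^Z(W) = max(w, 1),
where w, q are the max row and column weights of the matrix of ∂.
-/

abbrev F2 := ZMod 2

/-- Maximum Hamming weight of a row of a matrix. -/
def maxRowWt {β α : Type} [Fintype β] [Fintype α] (M : Matrix β α F2) : ℕ :=
  Finset.univ.sup fun i => (Finset.univ.filter fun j => M i j ≠ 0).card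

/-- Maximum Hamming weight of a column of a matrix. -/
def maxColWt {β α : Type} [Fintype β] [Fintype α] (M : Matrix β α F2) : ℕ :=
  maxRowWt M.transpose

/-- The matrix of a linear map between finite function spaces over 𝔽₂,
with respect to the standard bases. -/
noncomputable def matOf {α β : Type} [Fintype α] [Fintype β] [DecidableEq α]
    (d : (α → F2) →ₗ[F2] (β → F2)) : Matrix β α F2 :=
  LinearMap.toMatrix (Pi.basisFun F2 α) (Pi.basisFun F2 β) d

/-- Degree-0 differential of the sandwich complex: x ↦ (x, x, ∂x). -/
noncomputable def sandwichD0 (m r : ℕ) (d : (Fin m → F2) →ₗ[F2] (Fin r → F2)) :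
    (Fin m → F2) →ₗ[F2] ((Fin m → F2) × ((Fin m → F2) × (Fin r → F2))) :=
  LinearMap.id.prod (LinearMap.id.prod d)

/-- Degree-(-1) differential of the sandwich complex:
(a, b, c) ↦ (∂a + c, ∂b + c). -/
noncomputable def sandwichDm (m r : ℕ) (d : (Fin m → F2) →ₗ[F2] (Fin r → F2)) :
    ((Fin m → F2) × ((Fin m → F2) × (Fin r → F2))) →ₗ[F2]
      ((Fin r → F2) × (Fin r → F2)) :=
  ((d ∘ₗ LinearMap.fst F2 (Fin m → F2) ((Fin m → F2) × (Fin r → F2))) +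
      ((LinearMap.snd F2 (Fin m → F2) (Fin r → F2)) ∘ₗ
        (LinearMap.snd F2 (Fin m → F2) ((Fin m → F2) × (Fin r → F2))))).prod
    ((d ∘ₗ ((LinearMap.fst F2 (Fin m → F2) (Fin r → F2)) ∘ₗ
        (LinearMap.snd F2 (Fin m → F2) ((Fin m → F2) × (Fin r → F2))))) +
      ((LinearMap.snd F2 (Fin m → F2) (Fin r → F2)) ∘ₗ
        (LinearMap.snd F2 (Fin m → F2) ((Fin m → F2) × (Fin r → F2)))))

/-- Standard basis of the middle component W₀, indexed by Fin m ⊕ (Fin m ⊕ Fin r). -/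
noncomputable def basisW0 (m r : ℕ) :
    Module.Basis (Fin m ⊕ (Fin m ⊕ Fin r)) F2
      ((Fin m → F2) × ((Fin m → F2) × (Fin r → F2))) :=
  (Pi.basisFun F2 (Fin m)).prod ((Pi.basisFun F2 (Fin m)).prod (Pi.basisFun F2 (Fin r)))

/-- Standard basis of the bottom component W₋₁, indexed by Fin r ⊕ Fin r. -/
noncomputable def basisWm (m r : ℕ) :
    Module.Basis (Fin r ⊕ Fin r) F2 ((Fin r → F2) × (Fin r → F2)) :=
  (Pi.basisFun F2 (Fin r)).prod (Pi.basisFun F2 (Fin r))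

open Finset Matrix

/-!
In the standard bases the two differentials are block matrices built from the matrix `H` of `∂`:
`∂₀^W = [I; I; H]` and `∂₋₁^W = [H 0 I; 0 H I]`, and column weights are row weights of the
transposes `[I I Hᵀ]` and `[Hᵀ 0; 0 Hᵀ; I I]`. The weight of a row of a horizontal concatenation is
the sum of the weights of its pieces, and the maximal row weight of a vertical concatenation is the
larger of the two maxima. Since `m, r ≥ 1`, every block has at least one row, so a constant
contribution to the row weights, such as the `1` of an identity block, survives in the maximum.
-/

section HammingNorm

variable {β β₁ β₂ α γ R : Type*} [Fintype α] [Zero R] [DecidableEq R]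

@[simp]
lemma hammingNorm_fromCols_apply [Fintype γ] (A : Matrix β α R) (B : Matrix β γ R) (i : β) :
    hammingNorm (fromCols A B i) = hammingNorm (A i) + hammingNorm (B i) := by
  simp only [hammingNorm, card_filter, Fintype.sum_sum_type]
  rfl

@[simp]
lemma hammingNorm_fromRows_inl (A : Matrix β₁ α R) (B : Matrix β₂ α R) (i : β₁) :
    hammingNorm (fromRows A B (Sum.inl i)) = hammingNorm (A i) :=
  rfl

@[simp]
lemma hammingNorm_fromRows_inr (A : Matrix β₁ α R) (B : Matrix β₂ α R) (i : β₂) :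
    hammingNorm (fromRows A B (Sum.inr i)) = hammingNorm (B i) :=
  rfl

@[simp]
lemma hammingNorm_zero_apply (i : β) : hammingNorm ((0 : Matrix β α R) i) = 0 :=
  hammingNorm_zero

@[simp]
lemma hammingNorm_one_apply [DecidableEq α] [One R] [NeZero (1 : R)] (i : α) :
    hammingNorm ((1 : Matrix α α R) i) = 1 := by
  simp [hammingNorm, one_apply, filter_eq]

end HammingNorm

section MaxRowWt

variable {β β₁ β₂ α : Type} [Fintype β] [Fintype β₁] [Fintype β₂] [Fintype α]

lemma maxRowWt_eq_sup_hammingNorm (M : Matrix β α F2) :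
    maxRowWt M = univ.sup fun i => hammingNorm (M i) :=
  rfl

lemma maxRowWt_fromRows (A : Matrix β₁ α F2) (B : Matrix β₂ α F2) :
    maxRowWt (fromRows A B) = max (maxRowWt A) (maxRowWt B) := by
  simp only [maxRowWt_eq_sup_hammingNorm, ← univ_disjSum_univ, sup_disjSum,
    hammingNorm_fromRows_inl, hammingNorm_fromRows_inr]

lemma maxRowWt_congr {γ : Type} [Fintype γ] {M : Matrix β α F2} {N : Matrix β γ F2}
    (h : ∀ i, hammingNorm (M i) = hammingNorm (N i)) : maxRowWt M = maxRowWt N := by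
  simp only [maxRowWt_eq_sup_hammingNorm, h]

lemma maxRowWt_eq_add_of_hammingNorm_eq_add [Nonempty β] {γ : Type} [Fintype γ]
    {M : Matrix β α F2} {N : Matrix β γ F2} {c : ℕ}
    (h : ∀ i, hammingNorm (M i) = hammingNorm (N i) + c) :
    maxRowWt M = maxRowWt N + c := by
  simp only [maxRowWt_eq_sup_hammingNorm, h, Finset.sup_add univ_nonempty]

lemma maxRowWt_eq_of_hammingNorm_eq_const [Nonempty β] {M : Matrix β α F2} {c : ℕ}
    (h : ∀ i, hammingNorm (M i) = c) : maxRowWt M = c := by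
  simp only [maxRowWt_eq_sup_hammingNorm, h, sup_const univ_nonempty]

end MaxRowWt

section Sandwich

variable (m r : ℕ) (d : (Fin m → F2) →ₗ[F2] (Fin r → F2))

lemma toMatrix_sandwichD0 :
    LinearMap.toMatrix (Pi.basisFun F2 (Fin m)) (basisW0 m r) (sandwichD0 m r d) =
      fromRows 1 (fromRows 1 (matOf d)) := by
  ext (i | i | i) j <;>
    simp [LinearMap.toMatrix_apply, basisW0, sandwichD0, matOf, Pi.single_apply, one_apply]

lemma toMatrix_sandwichDm :
    LinearMap.toMatrix (basisW0 m r) (basisWm m r) (sandwichDm m r d) =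
      fromRows (fromCols (matOf d) (fromCols 0 1)) (fromCols 0 (fromCols (matOf d) 1)) := by
  ext (i | i) (j | j | j) <;>
    simp [LinearMap.toMatrix_apply, basisW0, basisWm, sandwichDm, matOf, Pi.single_apply, one_apply]

lemma transpose_toMatrix_sandwichDm :
    (LinearMap.toMatrix (basisW0 m r) (basisWm m r) (sandwichDm m r d))ᵀ =
      fromRows (fromCols (matOf d)ᵀ 0) (fromRows (fromCols 0 (matOf d)ᵀ) (fromCols 1 1)) := by
  simp only [toMatrix_sandwichDm, transpose_fromRows, transpose_fromCols, transpose_zero,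
    transpose_one, fromCols_fromRows_eq_fromBlocks, ← fromRows_fromCols_eq_fromBlocks]

variable {m r}

lemma maxRowWt_toMatrix_sandwichDm (hr : 1 ≤ r) :
    maxRowWt (LinearMap.toMatrix (basisW0 m r) (basisWm m r) (sandwichDm m r d)) =
      maxRowWt (matOf d) + 1 := by
  have : Nonempty (Fin r) := Fin.pos_iff_nonempty.mp hr
  rw [toMatrix_sandwichDm, maxRowWt_fromRows,
    maxRowWt_eq_add_of_hammingNorm_eq_add (N := matOf d) (c := 1) fun _ => by simp,
    maxRowWt_eq_add_of_hammingNorm_eq_add (M := fromCols 0 _) (N := matOf d) (c := 1)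
      fun _ => by simp, max_self]

lemma maxColWt_toMatrix_sandwichDm (hr : 1 ≤ r) :
    maxColWt (LinearMap.toMatrix (basisW0 m r) (basisWm m r) (sandwichDm m r d)) =
      max (maxColWt (matOf d)) 2 := by
  have : Nonempty (Fin r) := Fin.pos_iff_nonempty.mp hr
  rw [maxColWt, transpose_toMatrix_sandwichDm, maxRowWt_fromRows, maxRowWt_fromRows,
    maxRowWt_congr (M := fromCols _ 0) (N := (matOf d)ᵀ) fun _ => by simp,
    maxRowWt_congr (M := fromCols 0 _) (N := (matOf d)ᵀ) fun _ => by simp,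
    maxRowWt_eq_of_hammingNorm_eq_const (M := fromCols 1 1) (c := 2) fun _ => by simp,
    ← max_assoc, max_self, maxColWt]

lemma maxColWt_toMatrix_sandwichD0 (hm : 1 ≤ m) :
    maxColWt (LinearMap.toMatrix (Pi.basisFun F2 (Fin m)) (basisW0 m r) (sandwichD0 m r d)) =
      maxColWt (matOf d) + 2 := by
  have : Nonempty (Fin m) := Fin.pos_iff_nonempty.mp hm
  rw [maxColWt, maxColWt, toMatrix_sandwichD0, transpose_fromRows, transpose_fromRows,
    transpose_one]
  exact maxRowWt_eq_add_of_hammingNorm_eq_add fun _ => by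
    simp only [hammingNorm_fromCols_apply, hammingNorm_one_apply]
    omega

lemma maxRowWt_toMatrix_sandwichD0 (hm : 1 ≤ m) :
    maxRowWt (LinearMap.toMatrix (Pi.basisFun F2 (Fin m)) (basisW0 m r) (sandwichD0 m r d)) =
      max (maxRowWt (matOf d)) 1 := by
  have : Nonempty (Fin m) := Fin.pos_iff_nonempty.mp hm
  rw [toMatrix_sandwichD0, maxRowWt_fromRows, maxRowWt_fromRows,
    maxRowWt_eq_of_hammingNorm_eq_const hammingNorm_one_apply]
  omega

end Sandwich

theorem sandwich_complex_weights
    (m r : ℕ) (hm : 1 ≤ m) (hr : 1 ≤ r)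
    (d : (Fin m → F2) →ₗ[F2] (Fin r → F2)) :
    -- w^X(W) = w + 1
    maxRowWt (LinearMap.toMatrix (basisW0 m r) (basisWm m r) (sandwichDm m r d)) =
      maxRowWt (matOf d) + 1 ∧
    -- w^Z(W) = q + 2
    maxColWt (LinearMap.toMatrix (Pi.basisFun F2 (Fin m)) (basisW0 m r) (sandwichD0 m r d)) =
      maxColWt (matOf d) + 2 ∧
    -- q^X(W) = max(q, 2)
    maxColWt (LinearMap.toMatrix (basisW0 m r) (basisWm m r) (sandwichDm m r d)) =
      max (maxColWt (matOf d)) 2 ∧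
    -- q^Z(W) = max(w, 1)
    maxRowWt (LinearMap.toMatrix (Pi.basisFun F2 (Fin m)) (basisW0 m r) (sandwichD0 m r d)) =
      max (maxRowWt (matOf d)) 1 := by
  exact ⟨maxRowWt_toMatrix_sandwichDm d hr, maxColWt_toMatrix_sandwichD0 d hm,
    maxColWt_toMatrix_sandwichDm d hr, maxRowWt_toMatrix_sandwichD0 d hm⟩
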